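/- For every finite simple connected graph G on n vertices and λ ∈ (0,1/2), min over vertices u of c_λ(u) ≤ (n−1)·λ, with equality for the complete graph K_n. -/

import Mathlib

open SimpleGraph Finset

noncomputable def tExp {V : Type*} [Fintype V] (G : SimpleGraph V) (lam : ℝ) (u : V) : ℝ :=
  letI := Classical.decEq V
  ∑ v ∈ Finset.univ.erase u, (G.dist u v : ℝ) * lam ^ (G.dist u v)

noncomputable def numSP {V : Type*} [Fintype V] (G : SimpleGraph V) (k l : V) : ℕ :=
  letI := Classical.decEq V
  letI := Classical.decRel G.Adj
  (G.finsetWalkLength (G.dist k l) k l).card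

noncomputable def numSPedge {V : Type*} [Fintype V] (G : SimpleGraph V) (u v k l : V) : ℕ :=
  letI := Classical.decEq V
  letI := Classical.decRel G.Adj
  ((G.finsetWalkLength (G.dist k l) k l).filter (fun p => s(u, v) ∈ p.edges)).card

noncomputable def bExp {V : Type*} [Fintype V] (G : SimpleGraph V) (lam : ℝ) (u v : V) : ℝ :=
  (1 / 2) * ∑ k : V, ∑ l : V, ((numSPedge G u v k l : ℝ) / (numSP G k l)) * lam ^ (G.dist k l)

noncomputable def cExp {V : Type*} [Fintype V] (G : SimpleGraph V) (lam : ℝ) (u : V) : ℝ :=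
  letI := Classical.decRel G.Adj
  ∑ v ∈ G.neighborFinset u, bExp G lam u v

/-!
Summing `c_λ` over all vertices and exchanging the sums, an ordered pair `(k, l)` contributes
`λ ^ d(k, l) / σ(k, l)` times the number of incidences between shortest `k`–`l` walks and
darts of their edges. Each such walk has `d(k, l)` edges, hence at most `2 d(k, l)` darts, so
`∑ u, c_λ(u) ≤ ∑ k, ∑ l, d(k, l) λ ^ d(k, l) ≤ n (n - 1) λ` because `x λ ^ x ≤ λ` for
`λ ≤ 1 / 2`, and some vertex is at most the average. In `K_n` the only shortest walk between
distinct vertices is their edge, so every edge term `b_λ(u, v)` equals `λ`.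
-/

lemma nat_mul_pow_le_self {lam : ℝ} (h0 : 0 ≤ lam) (h1 : lam ≤ 1 / 2) (d : ℕ) :
    d * lam ^ d ≤ lam := by
  cases d with
  | zero => simpa using h0
  | succ m =>
    have hm : (m + 1 : ℝ) ≤ 2 ^ m := by exact_mod_cast Nat.lt_two_pow_self
    calc ((m + 1 : ℕ) : ℝ) * lam ^ (m + 1) = (m + 1) * lam ^ m * lam := by push_cast; ring
      _ ≤ 2 ^ m * lam ^ m * lam := by gcongr
      _ = (2 * lam) ^ m * lam := by ring
      _ ≤ 1 * lam := by gcongr; exact pow_le_one₀ (by positivity) (by linarith)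
      _ = lam := one_mul lam

lemma SimpleGraph.Walk.length_eq_one_iff_eq_toWalk {V : Type*} {G : SimpleGraph V} {k l : V}
    (h : G.Adj k l) (p : G.Walk k l) : p.length = 1 ↔ p = h.toWalk := by
  refine ⟨fun hp => ?_, fun hp => hp ▸ h.length_toWalk⟩
  cases p with
  | nil => simp at hp
  | cons _ q =>
    cases q with
    | nil => rfl
    | cons => simp at hp

section

variable {V : Type*} [Fintype V]

lemma Sym2.filter_mk_eq [DecidableEq V] (a b : V) :
    univ.filter (fun x : V × V => s(x.1, x.2) = s(a, b)) = {(a, b), (b, a)} := by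
  ext ⟨x, y⟩
  simp

lemma sum_sum_boole_mk_mem_le [DecidableEq V] (L : List (Sym2 V)) :
    ∑ u : V, ∑ v : V, (if s(u, v) ∈ L then 1 else 0) ≤ 2 * L.length := by
  rw [← Fintype.sum_prod_type', sum_boole, Nat.cast_id]
  have fiber (z : Sym2 V) : #{x ∈ univ.filter (fun x : V × V => s(x.1, x.2) ∈ L) |
      s(x.1, x.2) = z} ≤ 2 := by
    induction z using Sym2.ind with
    | h a b =>
      calc _ ≤ #(univ.filter (fun x : V × V => s(x.1, x.2) = s(a, b))) :=
            card_le_card (filter_subset_filter _ (subset_univ _))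
        _ ≤ 2 := Sym2.filter_mk_eq a b ▸ card_le_two
  calc #(univ.filter (fun x : V × V => s(x.1, x.2) ∈ L)) ≤ 2 * #L.toFinset :=
        card_le_mul_card_image_of_maps_to (f := fun x : V × V => s(x.1, x.2))
          (by simp) 2 fun z _ => fiber z
    _ ≤ 2 * L.length := by gcongr; exact L.toFinset_card_le

lemma sum_sum_numSPedge_le (G : SimpleGraph V) (k l : V) :
    ∑ u : V, ∑ v : V, numSPedge G u v k l ≤ 2 * G.dist k l * numSP G k l := by
  classical
  calc ∑ u : V, ∑ v : V, numSPedge G u v k l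
      = ∑ p ∈ G.finsetWalkLength (G.dist k l) k l, ∑ u : V, ∑ v : V,
          (if s(u, v) ∈ p.edges then 1 else 0) := by
        simp only [numSPedge, card_filter]
        rw [sum_congr rfl fun u _ => sum_comm, sum_comm]
    _ ≤ ∑ _p ∈ G.finsetWalkLength (G.dist k l) k l, 2 * G.dist k l := by
        refine sum_le_sum fun p hp => ?_
        rw [← (mem_finsetWalkLength_iff.mp hp), ← p.length_edges]
        exact sum_sum_boole_mk_mem_le p.edges
    _ = 2 * G.dist k l * numSP G k l := by
        rw [sum_const, smul_eq_mul, numSP, mul_comm]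

lemma sum_sum_numSPedge_div_numSP_le (G : SimpleGraph V) [DecidableRel G.Adj] (k l : V) :
    ∑ u : V, ∑ v ∈ G.neighborFinset u, (numSPedge G u v k l : ℝ) / numSP G k l
      ≤ 2 * G.dist k l := by
  simp_rw [← sum_div]
  refine div_le_of_le_mul₀ (by positivity) (by positivity) ?_
  have : ∑ u : V, ∑ v ∈ G.neighborFinset u, numSPedge G u v k l
      ≤ 2 * G.dist k l * numSP G k l :=
    (sum_le_sum fun u _ => sum_le_sum_of_subset (subset_univ _)).trans
      (sum_sum_numSPedge_le G k l)
  exact_mod_cast this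

lemma sum_univ_erase_const [DecidableEq V] (u : V) (c : ℝ) :
    ∑ _v ∈ univ.erase u, c = (Fintype.card V - 1) * c := by
  rw [sum_const, card_erase_of_mem (mem_univ u), card_univ, nsmul_eq_mul,
    Nat.cast_pred (Fintype.card_pos_iff.2 ⟨u⟩)]

lemma tExp_eq_sum (G : SimpleGraph V) (lam : ℝ) (u : V) :
    tExp G lam u = ∑ v : V, (G.dist u v : ℝ) * lam ^ G.dist u v := by
  classical
  exact sum_erase univ (by simp)

lemma tExp_le {lam : ℝ} (h0 : 0 ≤ lam) (h1 : lam ≤ 1 / 2) (G : SimpleGraph V) (u : V) :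
    tExp G lam u ≤ (Fintype.card V - 1) * lam := by
  classical
  calc tExp G lam u ≤ ∑ _v ∈ univ.erase u, lam :=
        sum_le_sum fun v _ => nat_mul_pow_le_self h0 h1 _
    _ = (Fintype.card V - 1) * lam := sum_univ_erase_const u lam

lemma sum_cExp_le_sum_tExp (G : SimpleGraph V) {lam : ℝ} (h0 : 0 ≤ lam) :
    ∑ u : V, cExp G lam u ≤ ∑ u : V, tExp G lam u := by
  classical
  calc ∑ u : V, cExp G lam u
      = 1 / 2 * ∑ k : V, ∑ l : V, (∑ u : V, ∑ v ∈ G.neighborFinset u,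
          (numSPedge G u v k l : ℝ) / numSP G k l) * lam ^ G.dist k l := by
        simp only [cExp, bExp, mul_sum, sum_mul]
        rw [sum_congr rfl fun u _ => sum_comm.trans (sum_congr rfl fun k _ => sum_comm),
          sum_comm]
        exact sum_congr rfl fun k _ => sum_comm
    _ ≤ 1 / 2 * ∑ k : V, ∑ l : V, (2 * G.dist k l) * lam ^ G.dist k l := by
        gcongr with k _ l _
        exact sum_sum_numSPedge_div_numSP_le G k l
    _ = ∑ u : V, tExp G lam u := by
        simp only [tExp_eq_sum, mul_sum]
        exact sum_congr rfl fun _ _ => sum_congr rfl fun _ _ => by ring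

lemma finsetWalkLength_dist_eq_singleton_of_adj {G : SimpleGraph V} [DecidableEq V]
    [DecidableRel G.Adj] {k l : V} (h : G.Adj k l) :
    G.finsetWalkLength (G.dist k l) k l = {h.toWalk} := by
  ext p
  rw [dist_eq_one_iff_adj.2 h, mem_finsetWalkLength_iff, mem_singleton,
    p.length_eq_one_iff_eq_toWalk h]

lemma numSP_of_adj {G : SimpleGraph V} {k l : V} (h : G.Adj k l) : numSP G k l = 1 := by
  classical
  rw [numSP, finsetWalkLength_dist_eq_singleton_of_adj h, card_singleton]

open Classical in
lemma numSPedge_of_adj {G : SimpleGraph V} {k l : V} (h : G.Adj k l) (u v : V) :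
    numSPedge G u v k l = if s(u, v) = s(k, l) then 1 else 0 := by
  rw [numSPedge, finsetWalkLength_dist_eq_singleton_of_adj h, filter_singleton, h.edges_toWalk]
  split_ifs <;> simp_all

lemma numSPedge_self (G : SimpleGraph V) (u v k : V) : numSPedge G u v k k = 0 := by
  classical
  rw [numSPedge, card_eq_zero, filter_eq_empty_iff]
  intro p hp
  rw [mem_finsetWalkLength_iff, dist_self] at hp
  simp [List.eq_nil_of_length_eq_zero (p.length_edges ▸ hp)]

lemma bExp_top {u v : V} (huv : u ≠ v) (lam : ℝ) :
    bExp (⊤ : SimpleGraph V) lam u v = lam := by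
  classical
  have term (k l : V) :
      (numSPedge ⊤ u v k l : ℝ) / numSP ⊤ k l * lam ^ (⊤ : SimpleGraph V).dist k l =
        if s(k, l) = s(u, v) then lam else 0 := by
    obtain rfl | hkl := eq_or_ne k l
    · rw [numSPedge_self, Nat.cast_zero, zero_div, zero_mul, if_neg]
      intro h
      obtain ⟨rfl, rfl⟩ | ⟨rfl, rfl⟩ := Sym2.eq_iff.1 h <;> exact huv rfl
    · have hadj : (⊤ : SimpleGraph V).Adj k l := hkl
      rw [numSPedge_of_adj hadj, numSP_of_adj hadj, dist_eq_one_iff_adj.2 hadj]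
      simp [eq_comm]
  rw [bExp, sum_congr rfl fun k _ => sum_congr rfl fun l _ => term k l, ← Fintype.sum_prod_type',
    sum_ite, sum_const_zero, sum_const, Sym2.filter_mk_eq, card_pair (by simp [huv])]
  ring

lemma cExp_top (lam : ℝ) (u : V) :
    cExp (⊤ : SimpleGraph V) lam u = (Fintype.card V - 1) * lam := by
  classical
  -- the instance `cExp` is defined with, so that `hN` rewrites its neighbour finset
  let _ := Classical.decRel (⊤ : SimpleGraph V).Adj
  have hN : (⊤ : SimpleGraph V).neighborFinset u = univ.erase u := by ext; simp [ne_comm]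
  simp only [cExp]
  rw [sum_congr hN fun v hv => bExp_top (mem_erase.1 hv).1.symm lam, sum_univ_erase_const]

end

theorem stmt12_general {V : Type*} [Fintype V] (G : SimpleGraph V)
    (hG : G.Connected) (n : ℕ) (hn : n = Fintype.card V)
    (lam : ℝ) (h0 : 0 < lam) (h2' : lam < 1 / 2) :
    Finset.univ.inf' (Finset.univ_nonempty_iff.mpr hG.nonempty) (cExp G lam)
      ≤ ((n : ℝ) - 1) * lam ∧
    (∀ u : V, cExp (⊤ : SimpleGraph V) lam u = ((n : ℝ) - 1) * lam) := by
  subst hn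
  refine ⟨?_, cExp_top lam⟩
  have hsum : ∑ u : V, cExp G lam u ≤ ∑ _u : V, (Fintype.card V - 1 : ℝ) * lam :=
    (sum_cExp_le_sum_tExp G h0.le).trans (sum_le_sum fun u _ => tExp_le h0.le h2'.le G u)
  obtain ⟨u, -, hu⟩ := exists_le_of_sum_le (univ_nonempty_iff.mpr hG.nonempty) hsum
  exact (inf'_le _ (mem_univ u)).trans hu

theorem stmt12 {V : Type*} [Fintype V] (G : SimpleGraph V)
    (hG : G.Connected) (n : ℕ) (hn : n = Fintype.card V) (h2 : 2 ≤ n)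
    (lam : ℝ) (h0 : 0 < lam) (h2' : lam < 1 / 2) :
    Finset.univ.inf' (Finset.univ_nonempty_iff.mpr hG.nonempty) (cExp G lam)
      ≤ ((n : ℝ) - 1) * lam ∧
    (∀ u : V, cExp (⊤ : SimpleGraph V) lam u = ((n : ℝ) - 1) * lam) :=
  stmt12_general G hG n hn lam h0 h2'
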